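/- arXiv:2307.13564 — 3 statements merged into one kernel-verified Lean document; each statement's English description precedes it below -/
import Mathlib

section
/- Let $1 < p < \infty$ and let $f \in L^{p,\infty}(\Omega)$ for a measurable set $\Omega \subset \mathbb{R}^N$. Then the distance of $f$ from $L^\infty(\Omega)$ in the $L^{p,\infty}$ quasimetric satisfies $\mathrm{dist}_{L^{p,\infty}(\Omega)}(f, L^\infty(\Omega)) = \lim_{M \to +\infty} \|f - T_M f\|_{L^{p,\infty}(\Omega)}$, where $T_M$ denotes truncation at level $M$. -/
open MeasureTheory Filter Set
open scoped ENNReal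

/-- The weak-`L^p` quasinorm `‖h‖_{p,∞} = (sup_{t>0} t^p |{x ∈ Ω : |h x| > t}|)^{1/p}`. -/
noncomputable def weakNorm {N : ℕ} (Ω : Set (Fin N → ℝ)) (p : ℝ)
    (h : (Fin N → ℝ) → ℝ) : ℝ≥0∞ :=
  (⨆ t : {t : ℝ // 0 < t},
    ENNReal.ofReal (t.1 ^ p) * volume {x ∈ Ω | t.1 < |h x|}) ^ (1 / p)

/-- Truncation at level `M`: `T_M y = (y/|y|) min(|y|, M)`. -/
noncomputable def trunc (M : ℝ) (y : ℝ) : ℝ := max (-M) (min y M)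

/-- The distance of `f ∈ L^{p,∞}(Ω)` to `L^∞(Ω)`, in the weak-`L^p` quasimetric. -/
noncomputable def distLinfty {N : ℕ} (Ω : Set (Fin N → ℝ)) (p : ℝ)
    (f : (Fin N → ℝ) → ℝ) : ℝ≥0∞ :=
  ⨅ g ∈ {g : (Fin N → ℝ) → ℝ | MemLp g ⊤ (volume.restrict Ω)},
    weakNorm Ω p (fun x => f x - g x)

lemma weakNorm_mono_ae {N : ℕ} {Ω : Set (Fin N → ℝ)} (hΩm : MeasurableSet Ω) {p : ℝ}
    (hp : 0 ≤ 1 / p) {h₁ h₂ : (Fin N → ℝ) → ℝ}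
    (hae : ∀ᵐ x ∂(volume.restrict Ω), |h₁ x| ≤ |h₂ x|) :
    weakNorm Ω p h₁ ≤ weakNorm Ω p h₂ := by
  unfold weakNorm
  refine ENNReal.rpow_le_rpow (iSup_mono fun t => mul_le_mul_right ?_ _) hp
  have e1 : {x ∈ Ω | t.1 < |h₁ x|} = {x | t.1 < |h₁ x|} ∩ Ω := by
    ext x; simp [mem_sep_iff, and_comm]
  have e2 : {x ∈ Ω | t.1 < |h₂ x|} = {x | t.1 < |h₂ x|} ∩ Ω := by
    ext x; simp [mem_sep_iff, and_comm]
  rw [e1, e2, ← Measure.restrict_apply' hΩm, ← Measure.restrict_apply' hΩm]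
  exact measure_mono_ae (hae.mono fun x hx hx1 => lt_of_lt_of_le hx1 hx)

lemma abs_trunc_le (M y : ℝ) : |trunc M y| ≤ |M| := by
  unfold trunc
  refine abs_le.2 ⟨le_max_of_le_left (by simp [neg_le, le_abs_self]), ?_⟩
  refine max_le (neg_le_abs M) (le_trans (min_le_right _ _) (le_abs_self M))

lemma trunc_dist_le {M a b : ℝ} (hM : 0 ≤ M) (hb : |b| ≤ M) :
    |a - trunc M a| ≤ |a - b| := by
  obtain ⟨hb1, hb2⟩ := abs_le.1 hb
  unfold trunc
  rcases le_total a M with h1 | h1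
  · rcases le_total (-M) a with h2 | h2
    · rw [min_eq_left h1, max_eq_right h2, sub_self, abs_zero]
      exact abs_nonneg _
    · rw [min_eq_left h1, max_eq_left h2, sub_neg_eq_add]
      calc |a + M| = -(a + M) := abs_of_nonpos (by linarith)
        _ ≤ b - a := by linarith
        _ ≤ |a - b| := by rw [abs_sub_comm]; exact le_abs_self _
  · rw [min_eq_right h1, max_eq_right (by linarith : -M ≤ M)]
    calc |a - M| = a - M := abs_of_nonneg (by linarith)
      _ ≤ a - b := by linarith
      _ ≤ |a - b| := le_abs_self _

/-- `dist_{L^{p,∞}}(f, L^∞) = lim_{M → ∞} ‖f - T_M f‖_{p,∞}`. -/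
theorem stmt2 {N : ℕ} (Ω : Set (Fin N → ℝ)) (hΩm : MeasurableSet Ω)
    (p : ℝ) (hp : 1 < p) (f : (Fin N → ℝ) → ℝ) (hf : Measurable f)
    (hfw : weakNorm Ω p f ≠ ⊤) :
    Tendsto (fun M : ℝ => weakNorm Ω p (fun x => f x - trunc M (f x)))
      atTop (nhds (distLinfty Ω p f)) := by
  have h1p : (0:ℝ) ≤ 1 / p := by positivity
  have hlow : ∀ M : ℝ, distLinfty Ω p f ≤
      weakNorm Ω p (fun x => f x - trunc M (f x)) := by
    intro M
    refine iInf₂_le (fun x => trunc M (f x)) ?_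
    refine memLp_top_of_bound ?_ |M| (ae_of_all _ fun x => ?_)
    · exact ((measurable_const.max (hf.min measurable_const))).aestronglyMeasurable
    · simpa [Real.norm_eq_abs] using abs_trunc_le M (f x)
  rw [tendsto_order]
  constructor
  · intro b hb
    exact Eventually.of_forall fun M => lt_of_lt_of_le hb (hlow M)
  · intro b hb
    simp only [distLinfty, mem_setOf_eq, iInf_lt_iff] at hb
    obtain ⟨g, hg, hgb⟩ := hb
    set μ := volume.restrict Ω
    set C : ℝ := (eLpNormEssSup g μ).toReal with hC
    have hCfin : eLpNormEssSup g μ ≠ ⊤ := by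
      have := hg.2
      rwa [eLpNorm_exponent_top, lt_top_iff_ne_top] at this
    have hC0 : 0 ≤ C := ENNReal.toReal_nonneg
    have hgC : ∀ᵐ x ∂μ, |g x| ≤ C := by
      filter_upwards [ae_le_eLpNormEssSup (f := g) (μ := μ)] with x hx
      have : (‖g x‖₊ : ℝ≥0∞) ≤ ENNReal.ofReal C := by
        rwa [hC, ENNReal.ofReal_toReal hCfin]
      rw [← Real.norm_eq_abs]
      calc ‖g x‖ = ((‖g x‖₊ : ℝ≥0∞)).toReal := by simp
        _ ≤ (ENNReal.ofReal C).toReal := ENNReal.toReal_mono ENNReal.ofReal_ne_top this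
        _ ≤ C := le_of_eq (ENNReal.toReal_ofReal hC0)
    filter_upwards [eventually_ge_atTop C] with M hM
    refine lt_of_le_of_lt ?_ hgb
    refine weakNorm_mono_ae hΩm h1p ?_
    filter_upwards [hgC] with x hx
    exact trunc_dist_le (le_trans hC0 hM) (hx.trans hM)
end

section
/- Let $\Omega \subset \mathbb{R}^N$ be the unit ball (or any bounded domain containing the origin) and let $\beta(x) = \kappa / |x|^{\gamma}$ with $\kappa > 0$ and $0 < \gamma < N$. Then for $p = N/\gamma$ one has $\beta \in L^{p,\infty}(\Omega)$ and $\mathrm{dist}_{L^{p,\infty}(\Omega)}(\beta, L^\infty(\Omega)) = \kappa \, \omega_N^{\gamma/N}$, where $\omega_N$ is the measure of the unit ball in $\mathbb{R}^N$. -/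
open MeasureTheory Filter Set
open scoped ENNReal

/-- Weak-`L^p` quasinorm on a subset `Ω` of Euclidean space. -/
noncomputable def weakNormE {N : ℕ} (Ω : Set (EuclideanSpace ℝ (Fin N))) (p : ℝ)
    (h : EuclideanSpace ℝ (Fin N) → ℝ) : ℝ≥0∞ :=
  (⨆ t : {t : ℝ // 0 < t},
    ENNReal.ofReal (t.1 ^ p) * volume {x ∈ Ω | t.1 < |h x|}) ^ (1 / p)

/-- Distance to `L^∞(Ω)` in the weak-`L^p` quasimetric. -/
noncomputable def distLinftyE {N : ℕ} (Ω : Set (EuclideanSpace ℝ (Fin N))) (p : ℝ)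
    (f : EuclideanSpace ℝ (Fin N) → ℝ) : ℝ≥0∞ :=
  ⨅ g ∈ {g : EuclideanSpace ℝ (Fin N) → ℝ | MemLp g ⊤ (volume.restrict Ω)},
    weakNormE Ω p (fun x => f x - g x)

private lemma minpow (N : ℕ) (κ γ s : ℝ) (hκ : 0 < κ) (hγ0 : 0 < γ) (hs : 0 < s) :
    min 1 ((κ/s) ^ (1/γ)) ^ N = min 1 ((κ/s) ^ ((N:ℝ)/γ)) := by
  have hks : 0 < κ / s := div_pos hκ hs
  have hrp : ((κ/s) ^ (1/γ)) ^ N = (κ/s) ^ ((N:ℝ)/γ) := by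
    rw [← Real.rpow_natCast ((κ/s) ^ (1/γ)) N, ← Real.rpow_mul hks.le]
    congr 1
    field_simp
    
  rcases le_or_gt 1 ((κ/s) ^ (1/γ)) with h1 | h1
  · have h2 : 1 ≤ κ / s := by
      by_contra h
      push_neg at h
      have := Real.rpow_lt_one hks.le h (by positivity : (0:ℝ) < 1/γ)
      linarith
    rw [min_eq_left h1, one_pow, min_eq_left (Real.one_le_rpow h2 (by positivity))]
  · have h2 : κ / s ≤ 1 := by
      by_contra h
      push_neg at h
      have := Real.one_le_rpow h.le (by positivity : (0:ℝ) ≤ 1/γ)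
      linarith
    rw [min_eq_right h1.le, hrp,
      min_eq_right (Real.rpow_le_one hks.le h2 (by positivity))]

private lemma vol_superlevel {N : ℕ} (hN : 0 < N) {κ γ : ℝ} (hκ : 0 < κ) (hγ0 : 0 < γ)
    {β : EuclideanSpace ℝ (Fin N) → ℝ} (hβ : ∀ x, x ≠ 0 → β x = κ / ‖x‖ ^ γ)
    {s : ℝ} (hs : 0 < s) :
    volume {x ∈ Metric.ball (0 : EuclideanSpace ℝ (Fin N)) 1 | s < |β x|}
      = ENNReal.ofReal (min 1 ((κ/s) ^ (1/γ)) ^ N) *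
        volume (Metric.ball (0 : EuclideanSpace ℝ (Fin N)) 1) := by
  haveI : Nonempty (Fin N) := ⟨⟨0, hN⟩⟩
  haveI : Nontrivial (EuclideanSpace ℝ (Fin N)) :=
    ⟨⟨EuclideanSpace.single ⟨0, hN⟩ (1:ℝ), 0, fun h => by
      simpa using congrArg (fun v => v ⟨0, hN⟩) h⟩⟩
  set r : ℝ := min 1 ((κ/s) ^ (1/γ)) with hrdef
  have hrpos : 0 < r := lt_min one_pos (Real.rpow_pos_of_pos (div_pos hκ hs) _)
  have hkey : ∀ x : EuclideanSpace ℝ (Fin N), x ≠ 0 →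
      (x ∈ {x ∈ Metric.ball (0 : EuclideanSpace ℝ (Fin N)) 1 | s < |β x|}
        ↔ x ∈ Metric.ball (0 : EuclideanSpace ℝ (Fin N)) r) := by
    intro x hx
    have hxn : 0 < ‖x‖ := norm_pos_iff.mpr hx
    have hxg : 0 < ‖x‖ ^ γ := Real.rpow_pos_of_pos hxn γ
    have habs : |β x| = κ / ‖x‖ ^ γ := by
      rw [hβ x hx, abs_of_pos (div_pos hκ hxg)]
    have h1 : (s < κ / ‖x‖ ^ γ) ↔ ‖x‖ ^ γ < κ / s := by
      rw [lt_div_iff₀ hxg, lt_div_iff₀ hs, mul_comm]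
    have h2 : ‖x‖ ^ γ < κ / s ↔ ‖x‖ < (κ/s) ^ (1/γ) := by
      rw [one_div, ← Real.lt_rpow_inv_iff_of_pos (norm_nonneg x) (by positivity) hγ0]
    simp only [Set.mem_setOf_eq, mem_ball_zero_iff, habs, h1, h2, hrdef, lt_min_iff]
  have h0 : (volume : Measure (EuclideanSpace ℝ (Fin N))) {(0 : EuclideanSpace ℝ (Fin N))} = 0 :=
    measure_singleton 0
  have hae : {x ∈ Metric.ball (0 : EuclideanSpace ℝ (Fin N)) 1 | s < |β x|}
      =ᵐ[volume] Metric.ball (0 : EuclideanSpace ℝ (Fin N)) r := by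
    refine (MeasureTheory.ae_eq_set.mpr ⟨measure_mono_null ?_ h0, measure_mono_null ?_ h0⟩)
    · rintro x ⟨hxA, hxB⟩
      by_contra h
      exact hxB ((hkey x h).mp hxA)
    · rintro x ⟨hxA, hxB⟩
      by_contra h
      exact hxB ((hkey x h).mpr hxA)
  rw [measure_congr hae, Measure.addHaar_ball_of_pos volume 0 hrpos,
    finrank_euclideanSpace_fin]

/-- For `β(x) = κ/|x|^γ` on the unit ball, with `p = N/γ`, `β ∈ L^{p,∞}` and
`dist_{L^{p,∞}}(β, L^∞) = κ ω_N^{γ/N}` where `ω_N` is the measure of the unit ball. -/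
theorem stmt3 {N : ℕ} (hN : 0 < N) (κ γ : ℝ) (hκ : 0 < κ) (hγ0 : 0 < γ) (hγN : γ < N)
    (Ω : Set (EuclideanSpace ℝ (Fin N))) (hΩ : Ω = Metric.ball (0 : EuclideanSpace ℝ (Fin N)) 1)
    (β : EuclideanSpace ℝ (Fin N) → ℝ) (hβ : ∀ x, x ≠ 0 → β x = κ / ‖x‖ ^ γ)
    (p : ℝ) (hp : p = N / γ) :
    weakNormE Ω p β ≠ ⊤ ∧
      distLinftyE Ω p β =
        ENNReal.ofReal
          (κ * (volume (Metric.ball (0 : EuclideanSpace ℝ (Fin N)) 1)).toReal ^ (γ / N)) := by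
  subst hΩ
  have hNR : (0:ℝ) < N := Nat.cast_pos.mpr hN
  have hp0 : 0 < p := hp ▸ div_pos hNR hγ0
  have h1p : 1/p = γ/(N:ℝ) := by rw [hp, one_div_div]
  set ω := volume (Metric.ball (0 : EuclideanSpace ℝ (Fin N)) 1) with hω
  have hω0 : ω ≠ 0 := (Metric.measure_ball_pos _ _ one_pos).ne'
  have hωT : ω ≠ ⊤ := measure_ball_lt_top.ne
  -- value of t^p * vol of superlevel set
  have hval : ∀ s : ℝ, 0 < s →
      ENNReal.ofReal (s ^ p) *
        volume {x ∈ Metric.ball (0 : EuclideanSpace ℝ (Fin N)) 1 | s < |β x|}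
        = ENNReal.ofReal (min (s ^ p) (κ ^ p)) * ω := by
    intro s hs
    have hsk : s * (κ/s) = κ := by field_simp
    rw [vol_superlevel hN hκ hγ0 hβ hs, ← hω, ← mul_assoc,
      ← ENNReal.ofReal_mul (Real.rpow_nonneg hs.le p),
      minpow N κ γ s hκ hγ0 hs, ← hp]
    congr 2
    rw [mul_min_of_nonneg _ _ (Real.rpow_nonneg hs.le p), mul_one,
      ← Real.mul_rpow hs.le (by positivity), hsk]
  have hsup : (⨆ t : {t : ℝ // 0 < t},
      ENNReal.ofReal (t.1 ^ p) *
        volume {x ∈ Metric.ball (0 : EuclideanSpace ℝ (Fin N)) 1 | t.1 < |β x|})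
      = ENNReal.ofReal (κ ^ p) * ω := by
    apply le_antisymm
    · refine iSup_le fun t => ?_
      rw [hval t.1 t.2]
      exact mul_le_mul_left (ENNReal.ofReal_le_ofReal (min_le_right _ _)) ω
    · refine le_trans ?_ (le_iSup _ (⟨κ, hκ⟩ : {t : ℝ // 0 < t}))
      rw [hval κ hκ, min_self]
  -- the common rpow computation
  have hTeq : (ENNReal.ofReal (κ ^ p) * ω) ^ (1/p)
      = ENNReal.ofReal (κ * ω.toReal ^ (γ / (N:ℝ))) := by
    rw [ENNReal.mul_rpow_of_nonneg _ _ (by positivity : (0:ℝ) ≤ 1/p),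
      ENNReal.ofReal_rpow_of_pos (Real.rpow_pos_of_pos hκ p),
      ← Real.rpow_mul hκ.le, mul_one_div_cancel hp0.ne', Real.rpow_one]
    nth_rewrite 1 [← ENNReal.ofReal_toReal hωT]
    rw [ENNReal.ofReal_rpow_of_pos (ENNReal.toReal_pos hω0 hωT),
      ← ENNReal.ofReal_mul hκ.le, h1p]
  have hWN : weakNormE (Metric.ball (0 : EuclideanSpace ℝ (Fin N)) 1) p β
      = ENNReal.ofReal (κ * ω.toReal ^ (γ / (N:ℝ))) := by
    rw [weakNormE, hsup, hTeq]
  refine ⟨by rw [hWN]; exact ENNReal.ofReal_ne_top, ?_⟩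
  apply le_antisymm
  · refine le_trans (iInf₂_le (0 : EuclideanSpace ℝ (Fin N) → ℝ) MemLp.zero) ?_
    have : (fun x => β x - (0 : EuclideanSpace ℝ (Fin N) → ℝ) x) = β := by
      funext x; simp
    rw [this, hWN]
  · refine le_iInf₂ fun g hg => ?_
    have hgT : eLpNormEssSup g
        (volume.restrict (Metric.ball (0 : EuclideanSpace ℝ (Fin N)) 1)) ≠ ⊤ := by
      have h2 := hg.2
      rw [eLpNorm_exponent_top] at h2
      exact h2.ne
    set C := (eLpNormEssSup g
      (volume.restrict (Metric.ball (0 : EuclideanSpace ℝ (Fin N)) 1))).toReal with hCdef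
    have hC0 : 0 ≤ C := ENNReal.toReal_nonneg
    have hae : ∀ᵐ x ∂(volume.restrict (Metric.ball (0 : EuclideanSpace ℝ (Fin N)) 1)),
        |g x| ≤ C := by
      filter_upwards [ae_le_eLpNormEssSup
        (f := g) (μ := volume.restrict (Metric.ball (0 : EuclideanSpace ℝ (Fin N)) 1))] with x hx
      have := ENNReal.toReal_mono hgT hx
      simpa [Real.norm_eq_abs] using this
    have hnull : volume ({x | ¬ |g x| ≤ C} ∩ Metric.ball (0 : EuclideanSpace ℝ (Fin N)) 1)
        = 0 := by
      have h := hae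
      rw [MeasureTheory.ae_iff, Measure.restrict_apply' measurableSet_ball] at h
      exact h
    have hmeas : ∀ t : ℝ,
        volume {x ∈ Metric.ball (0 : EuclideanSpace ℝ (Fin N)) 1 | t + C < |β x|}
          ≤ volume {x ∈ Metric.ball (0 : EuclideanSpace ℝ (Fin N)) 1 | t < |β x - g x|} := by
      intro t
      calc volume {x ∈ Metric.ball (0 : EuclideanSpace ℝ (Fin N)) 1 | t + C < |β x|}
          ≤ volume ({x ∈ Metric.ball (0 : EuclideanSpace ℝ (Fin N)) 1 | t < |β x - g x|}
              ∪ ({x | ¬ |g x| ≤ C} ∩ Metric.ball (0 : EuclideanSpace ℝ (Fin N)) 1)) := by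
            apply measure_mono
            rintro x ⟨hx1, hx2⟩
            by_cases hgx : |g x| ≤ C
            · left
              refine ⟨hx1, ?_⟩
              have h2 := abs_sub_abs_le_abs_sub (β x) (g x)
              linarith
            · right; exact ⟨hgx, hx1⟩
        _ ≤ volume {x ∈ Metric.ball (0 : EuclideanSpace ℝ (Fin N)) 1 | t < |β x - g x|}
              + volume ({x | ¬ |g x| ≤ C} ∩ Metric.ball (0 : EuclideanSpace ℝ (Fin N)) 1) :=
            measure_union_le _ _
        _ = _ := by rw [hnull, add_zero]
    have hge : ENNReal.ofReal (κ ^ p) * ω ≤ ⨆ t : {t : ℝ // 0 < t},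
        ENNReal.ofReal (t.1 ^ p) *
          volume {x ∈ Metric.ball (0 : EuclideanSpace ℝ (Fin N)) 1 | t.1 < |β x - g x|} := by
      refine ENNReal.le_of_forall_lt_one_mul_le fun a ha => ?_
      rcases eq_or_ne a 0 with rfl | ha0
      · simp
      have haT : a ≠ ⊤ := (ha.trans ENNReal.one_lt_top).ne
      set b := a.toReal with hbdef
      have hb0 : 0 < b := ENNReal.toReal_pos ha0 haT
      have hb1 : b < 1 := by
        have := ENNReal.toReal_strict_mono ENNReal.one_ne_top ha
        simpa using this
      set c := b ^ (1/p) with hcdef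
      have hc0 : 0 < c := Real.rpow_pos_of_pos hb0 _
      have hc1 : c < 1 := Real.rpow_lt_one hb0.le hb1 (by positivity)
      set t := max κ (c * C / (1 - c)) + 1 with htdef
      have hκt : κ ≤ max κ (c * C / (1 - c)) := le_max_left _ _
      have ht0 : 0 < t := by simp only [htdef]; linarith
      have htκ : κ ≤ t + C := by simp only [htdef]; linarith
      have htC : 0 < t + C := by linarith
      have htc : c * (t + C) ≤ t := by
        have h1 : c * C / (1 - c) ≤ max κ (c * C / (1 - c)) := le_max_right _ _
        have h2 : 0 < 1 - c := by linarith
        rw [div_le_iff₀ h2] at h1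
        simp only [htdef]
        nlinarith
      have hbc : b * κ ^ p ≤ (t/(t+C)) ^ p * κ ^ p := by
        have h1 : c ≤ t/(t+C) := (le_div_iff₀ htC).mpr htc
        have h2 : c ^ p ≤ (t/(t+C)) ^ p := Real.rpow_le_rpow hc0.le h1 hp0.le
        have h3 : c ^ p = b := by
          rw [hcdef, ← Real.rpow_mul hb0.le, one_div_mul_cancel hp0.ne', Real.rpow_one]
        rw [← h3]
        exact mul_le_mul_of_nonneg_right h2 (Real.rpow_nonneg hκ.le p)
      have hvol : volume {x ∈ Metric.ball (0 : EuclideanSpace ℝ (Fin N)) 1 | t + C < |β x|}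
          = ENNReal.ofReal ((κ/(t+C)) ^ p) * ω := by
        rw [vol_superlevel hN hκ hγ0 hβ htC, ← hω, minpow N κ γ (t+C) hκ hγ0 htC, ← hp,
          min_eq_right (Real.rpow_le_one (by positivity) ((div_le_one htC).mpr htκ) hp0.le)]
      refine le_trans ?_ (le_iSup _ (⟨t, ht0⟩ : {t : ℝ // 0 < t}))
      calc a * (ENNReal.ofReal (κ ^ p) * ω)
          = ENNReal.ofReal (b * κ ^ p) * ω := by
            rw [← mul_assoc]
            congr 1
            rw [← ENNReal.ofReal_toReal haT, ← hbdef,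
              ← ENNReal.ofReal_mul (by positivity)]
        _ ≤ ENNReal.ofReal ((t/(t+C)) ^ p * κ ^ p) * ω :=
            mul_le_mul_left (ENNReal.ofReal_le_ofReal hbc) ω
        _ = ENNReal.ofReal (t ^ p) * (ENNReal.ofReal ((κ/(t+C)) ^ p) * ω) := by
            rw [← mul_assoc, ← ENNReal.ofReal_mul (Real.rpow_nonneg ht0.le p)]
            congr 2
            rw [← Real.mul_rpow (by positivity) hκ.le,
              ← Real.mul_rpow ht0.le (by positivity)]
            congr 1
            ring
        _ = ENNReal.ofReal (t ^ p) *
              volume {x ∈ Metric.ball (0 : EuclideanSpace ℝ (Fin N)) 1 | t + C < |β x|} := by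
            rw [hvol]
        _ ≤ ENNReal.ofReal (t ^ p) *
              volume {x ∈ Metric.ball (0 : EuclideanSpace ℝ (Fin N)) 1 | t < |β x - g x|} :=
            mul_le_mul_right (hmeas t) _
    rw [weakNormE]
    calc ENNReal.ofReal (κ * ω.toReal ^ (γ / (N:ℝ)))
        = (ENNReal.ofReal (κ ^ p) * ω) ^ (1/p) := hTeq.symm
      _ ≤ _ := ENNReal.rpow_le_rpow hge (by positivity)
end

section
/- Let $g : [k_0, \infty) \to [0, \infty)$ be a nonincreasing differentiable function, $C > 0$, and $0 < a < 1$, such that $(g(k)/k)^a \le -C g'(k)$ for all $k \ge k_0$ with $k_0 \ge 1$. Then there exists $\bar k \ge k_0$ with $g(\bar k) = 0$. -/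
open Set

/-- ODE-type lemma: if `g : [k₀,∞) → [0,∞)` is nonincreasing and differentiable with
`(g k / k)^a ≤ -C g'(k)` for all `k ≥ k₀ ≥ 1`, where `C > 0` and `0 < a < 1`,
then `g` vanishes at some `k̄ ≥ k₀`. -/
theorem stmt7 (g g' : ℝ → ℝ) (k₀ C a : ℝ) (hk₀ : 1 ≤ k₀) (hC : 0 < C)
    (ha0 : 0 < a) (ha1 : a < 1)
    (hderiv : ∀ k ∈ Ici k₀, HasDerivAt g (g' k) k)
    (hmono : AntitoneOn g (Ici k₀))
    (hnonneg : ∀ k ∈ Ici k₀, 0 ≤ g k)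
    (hineq : ∀ k ∈ Ici k₀, (g k / k) ^ a ≤ -C * g' k) :
    ∃ kbar, k₀ ≤ kbar ∧ g kbar = 0 := by
  by_contra hcon
  push_neg at hcon
  have hpos : ∀ k ∈ Ici k₀, 0 < g k := by
    intro k hk
    rcases (hnonneg k hk).lt_or_eq with h | h
    · exact h
    · exact absurd h.symm (hcon k hk)
  set b : ℝ := 1 - a with hb
  have hb0 : 0 < b := by simp [hb]; linarith
  have hk0pos : 0 < k₀ := lt_of_lt_of_le one_pos hk₀
  set F : ℝ → ℝ := fun k => g k ^ b + (k ^ b - k₀ ^ b) / C with hF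
  have hFderiv : ∀ k ∈ Ici k₀, HasDerivAt F
      (g' k * b * g k ^ (b - 1) + (b * k ^ (b - 1)) / C) k := by
    intro k hk
    have hkpos : 0 < k := lt_of_lt_of_le hk0pos hk
    have h1 : HasDerivAt (fun k => g k ^ b) (g' k * b * g k ^ (b - 1)) k :=
      (hderiv k hk).rpow_const (Or.inl (hpos k hk).ne')
    have h2 : HasDerivAt (fun k : ℝ => (k ^ b - k₀ ^ b) / C)
        ((b * k ^ (b - 1)) / C) k :=
      ((Real.hasDerivAt_rpow_const (Or.inl hkpos.ne')).sub_const _).div_const C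
    exact h1.add h2
  have hFanti : AntitoneOn F (Ici k₀) := by
    apply antitoneOn_of_deriv_nonpos (convex_Ici k₀)
    · exact fun k hk => (hFderiv k hk).continuousAt.continuousWithinAt
    · intro k hk
      rw [interior_Ici] at hk
      exact (hFderiv k (mem_Ici.mpr (mem_Ioi.mp hk).le)).differentiableAt.differentiableWithinAt
    · intro k hk
      rw [interior_Ici] at hk
      have hk' : k ∈ Ici k₀ := mem_Ici.mpr (mem_Ioi.mp hk).le
      rw [(hFderiv k hk').deriv]
      have hkpos : 0 < k := lt_of_lt_of_le hk0pos hk'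
      have hgpos : 0 < g k := hpos k hk'
      have e1 : g k ^ (b - 1) * g k ^ a = 1 := by
        rw [← Real.rpow_add hgpos, show b - 1 + a = 0 by simp [hb], Real.rpow_zero]
      have e2 : k ^ (b - 1) * k ^ a = 1 := by
        rw [← Real.rpow_add hkpos, show b - 1 + a = 0 by simp [hb], Real.rpow_zero]
      have hga : 0 < g k ^ a := Real.rpow_pos_of_pos hgpos a
      have hka : 0 < k ^ a := Real.rpow_pos_of_pos hkpos a
      have hgb : 0 < g k ^ (b - 1) := Real.rpow_pos_of_pos hgpos _
      have hkb : 0 < k ^ (b - 1) := Real.rpow_pos_of_pos hkpos _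
      have hiq := hineq k hk'
      rw [Real.div_rpow (hnonneg k hk') hkpos.le] at hiq
      -- hiq : g k ^ a / k ^ a ≤ -C * g' k
      have hg' : g' k ≤ -(g k ^ a / k ^ a) / C := by
        rw [le_div_iff₀ hC] at *
        nlinarith
      have key : g' k * (b * g k ^ (b - 1)) ≤ -(g k ^ a / k ^ a) / C * (b * g k ^ (b - 1)) :=
        mul_le_mul_of_nonneg_right hg' (by positivity)
      have e3 : -(g k ^ a / k ^ a) / C * (b * g k ^ (b - 1)) = -(b * k ^ (b - 1)) / C := by
        field_simp
        linear_combination e2 - e1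
      have key2 : g' k * (b * g k ^ (b - 1)) ≤ -(b * k ^ (b - 1)) / C := key.trans_eq e3
      have e4 : g' k * b * g k ^ (b - 1) = g' k * (b * g k ^ (b - 1)) := by ring
      rw [e4]
      have e5 : -(b * k ^ (b - 1)) / C = -(b * k ^ (b - 1) / C) := by ring
      rw [e5] at key2
      linarith [key2]
  -- now derive contradiction
  have hFk₀ : F k₀ = g k₀ ^ b := by simp [hF]
  set M : ℝ := k₀ ^ b + C * (g k₀ ^ b + 1) with hM
  have hgk₀b : 0 ≤ g k₀ ^ b := Real.rpow_nonneg (hnonneg k₀ Set.self_mem_Ici) b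
  have hk₀b : 0 < k₀ ^ b := Real.rpow_pos_of_pos hk0pos b
  have hMpos : 0 < M := by positivity
  set k₁ : ℝ := M ^ b⁻¹ with hk₁
  have hk₁b : k₁ ^ b = M := Real.rpow_inv_rpow hMpos.le hb0.ne'
  have hk₁ge : k₀ ≤ k₁ := by
    have : k₀ = (k₀ ^ b) ^ b⁻¹ := (Real.rpow_rpow_inv hk0pos.le hb0.ne').symm
    rw [this]
    apply Real.rpow_le_rpow hk₀b.le _ (by positivity)
    nlinarith
  have hle := hFanti (self_mem_Ici) hk₁ge hk₁ge
  rw [hFk₀] at hle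
  have hFk₁ : F k₁ = g k₁ ^ b + (g k₀ ^ b + 1) := by
    simp only [hF, hk₁b, hM]
    field_simp
    ring
  rw [hFk₁] at hle
  have : 0 ≤ g k₁ ^ b := Real.rpow_nonneg (hnonneg k₁ hk₁ge) b
  linarith
end
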